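/- arXiv:1811.07424 — 2 statements merged into one kernel-verified Lean document; each statement's English description precedes it below -/
import Mathlib

section
/- In the symbolic slicing setup, for every τ ∈ S, every (ω,η) ∈ {0,…,n₁−1}^ℕ × {0,…,n₂−1}^ℕ and every subset A ⊆ X_{τ,ω,η}, the Hausdorff dimension of A (with respect to the metric d(x,y) = m₂^{−min{k ≥ 0 : x_k ≠ y_k}}) equals the Hausdorff dimension of π_{τ,ω,η}(A) in ℝ². -/
/-!
The projection `π` is Lipschitz for the symbolic metric: two codes that agree on their first `n`
symbols have `y`-coordinates agreeing in `n` base-`m₂` digits and `x`-coordinates agreeing in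
`#(Z(τ) ∩ [0, n)) ≥ nθ - 1` base-`m₁` digits, and `m₁ ^ (nθ) = m₂ ^ n`.

Conversely, `τ` is a limit of rotation codings `v_t`, whose counting functions are `⌊t + nθ⌋`,
so `#(Z(τ) ∩ [0, n))` stays within `1` of `nθ`. If a planar set has diameter `r` with
`m₂ ^ (-n-1) < r ≤ m₂ ^ (-n)`, the length-`n` prefixes of the codes in its preimage are
determined by a base-`m₂` and a base-`m₁` integer prefix, each of which takes only boundedly many
values; so the preimage is covered by boundedly many cylinders of diameter `m₂ ^ (-n) < m₂ r`.
Hence the preimage of a set of `d`-dimensional Hausdorff measure zero again has measure zero,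
and the dimension cannot drop under `π`.
-/

open Set Filter
noncomputable section

/-- The binary coding sequence of `t` under the rotation by `θ`:
`v_t(n) = 1` iff `t + nθ (mod 1) ∈ [1−θ, 1)`. -/
def vseq (θ t : ℝ) : ℕ → Bool := fun n => decide (1 - θ ≤ Int.fract (t + n * θ))

/-- `S`: the closure of `{v_t : t ∈ [0,1)}` in the product topology on `{0,1}^ℕ₀`. -/
def Sset (θ : ℝ) : Set (ℕ → Bool) :=
  closure { v | ∃ t ∈ Set.Ico (0 : ℝ) 1, v = vseq θ t }

/-- `x_{k+1}(τ)`: the (0-indexed) `k`-th position where `τ` equals `1`. -/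
def nthOne (τ : ℕ → Bool) (k : ℕ) : ℕ := Nat.nth (fun n => τ n = true) k

/-- The symbolic space `X_{τ,ω,η}`: sequences `((a_n,b_n))_{n≥0}` with
`b_n ∈ Λ_{η_n}`, `a_{x_{k+1}(τ)} ∈ Γ_{ω_k}`, and `a_n = 1` off `Z(τ)`. -/
def Xset (Γ Λ : ℕ → Set ℕ) (τ : ℕ → Bool) (ω η : ℕ → ℕ) : Set (ℕ → ℕ × ℕ) :=
  { c | (∀ n, (c n).2 ∈ Λ (η n)) ∧ (∀ k, (c (nthOne τ k)).1 ∈ Γ (ω k)) ∧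
        (∀ n, τ n = false → (c n).1 = 1) }

/-- The projection `π_{τ,ω,η} : X_{τ,ω,η} → [0,1]²`. -/
def piSym (m₁ m₂ : ℕ) (τ : ℕ → Bool) (c : ℕ → ℕ × ℕ) : ℝ × ℝ :=
  (∑' k : ℕ, ((c (nthOne τ k)).1 : ℝ) / (m₁ : ℝ) ^ (k + 1),
   ∑' k : ℕ, ((c k).2 : ℝ) / (m₂ : ℝ) ^ (k + 1))

/-- The symbolic metric `d(x,y) = m₂^{−min{k : x_k ≠ y_k}}`. -/
def symDist (m₂ : ℕ) (x y : ℕ → ℕ × ℕ) : ℝ :=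
  letI := Classical.dec (x = y)
  if x = y then 0 else ((m₂ : ℝ) ^ sInf { k | x k ≠ y k })⁻¹

theorem symDist_nonneg (m₂ : ℕ) (x y : ℕ → ℕ × ℕ) : 0 ≤ symDist m₂ x y := by
  unfold symDist
  split
  · exact le_refl 0
  · exact inv_nonneg.2 (pow_nonneg (Nat.cast_nonneg _) _)

theorem symDist_self (m₂ : ℕ) (x : ℕ → ℕ × ℕ) : symDist m₂ x x = 0 := by
  unfold symDist
  simp

theorem symDist_comm (m₂ : ℕ) (x y : ℕ → ℕ × ℕ) : symDist m₂ x y = symDist m₂ y x := by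
  have hset : { k | x k ≠ y k } = { k | y k ≠ x k } := by
    ext k; exact ne_comm
  unfold symDist
  by_cases h : x = y
  · simp [h]
  · have h' : y ≠ x := fun e => h e.symm
    rw [if_neg h, if_neg h', hset]

theorem symDist_triangle (m₂ : ℕ) (hm : 2 ≤ m₂) (x y z : ℕ → ℕ × ℕ) :
    symDist m₂ x z ≤ symDist m₂ x y + symDist m₂ y z := by
  by_cases hxz : x = z
  · have h0 : symDist m₂ x z = 0 := by unfold symDist; rw [if_pos hxz]
    rw [h0]
    exact add_nonneg (symDist_nonneg _ _ _) (symDist_nonneg _ _ _)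
  by_cases hxy : x = y
  · subst hxy
    rw [symDist_self]
    linarith [le_refl (symDist m₂ x z)]
  by_cases hyz : y = z
  · subst hyz
    rw [symDist_self]
    linarith [le_refl (symDist m₂ x y)]
  -- main case: compare first-difference indices
  have hne : { k | x k ≠ z k }.Nonempty := Set.nonempty_def.2 (Function.ne_iff.1 hxz)
  have hw : sInf { k | x k ≠ z k } ∈ { k | x k ≠ z k } := Nat.sInf_mem hne
  set w := sInf { k | x k ≠ z k } with hwdef
  have hkey : sInf { k | x k ≠ y k } ≤ w ∨ sInf { k | y k ≠ z k } ≤ w := by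
    by_contra hcon
    push_neg at hcon
    have h1 : w ∉ { k | x k ≠ y k } := Nat.notMem_of_lt_sInf hcon.1
    have h2 : w ∉ { k | y k ≠ z k } := Nat.notMem_of_lt_sInf hcon.2
    simp only [Set.mem_setOf_eq, not_not] at h1 h2
    exact hw (h1.trans h2)
  have hm1 : (1 : ℝ) ≤ (m₂ : ℝ) := by
    have : (1 : ℕ) ≤ m₂ := by omega
    exact_mod_cast this
  have hpos : ∀ a : ℕ, (0 : ℝ) < (m₂ : ℝ) ^ a := fun a =>
    pow_pos (by linarith) a
  have hxzval : symDist m₂ x z = ((m₂ : ℝ) ^ w)⁻¹ := by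
    unfold symDist; rw [if_neg hxz]
  have hxyval : symDist m₂ x y = ((m₂ : ℝ) ^ sInf { k | x k ≠ y k })⁻¹ := by
    unfold symDist; rw [if_neg hxy]
  have hyzval : symDist m₂ y z = ((m₂ : ℝ) ^ sInf { k | y k ≠ z k })⁻¹ := by
    unfold symDist; rw [if_neg hyz]
  rcases hkey with hk | hk
  · have : ((m₂ : ℝ) ^ w)⁻¹ ≤ ((m₂ : ℝ) ^ sInf { k | x k ≠ y k })⁻¹ := by
      apply inv_anti₀ (hpos _)
      exact pow_le_pow_right₀ hm1 hk
    rw [hxzval, hxyval]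
    linarith [symDist_nonneg m₂ y z]
  · have : ((m₂ : ℝ) ^ w)⁻¹ ≤ ((m₂ : ℝ) ^ sInf { k | y k ≠ z k })⁻¹ := by
      apply inv_anti₀ (hpos _)
      exact pow_le_pow_right₀ hm1 hk
    rw [hxzval, hyzval]
    linarith [symDist_nonneg m₂ x y]

theorem symDist_eq_zero (m₂ : ℕ) (hm : 2 ≤ m₂) {x y : ℕ → ℕ × ℕ}
    (h : symDist m₂ x y = 0) : x = y := by
  by_contra hxy
  have hval : symDist m₂ x y = ((m₂ : ℝ) ^ sInf { k | x k ≠ y k })⁻¹ := by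
    unfold symDist; rw [if_neg hxy]
  have hpos : (0 : ℝ) < ((m₂ : ℝ) ^ sInf { k | x k ≠ y k })⁻¹ := by
    apply inv_pos.2
    apply pow_pos
    have : (0 : ℕ) < m₂ := by omega
    exact_mod_cast this
  rw [hval] at h
  linarith

/-- Type synonym for `ℕ → ℕ × ℕ`, carrying the symbolic metric with base `m₂`. -/
def SymSeq (m₂ : ℕ) : Type := ℕ → ℕ × ℕ

noncomputable instance (m₂ : ℕ) [hf : Fact (2 ≤ m₂)] : MetricSpace (SymSeq m₂) where
  dist x y := symDist m₂ x y
  dist_self x := symDist_self m₂ x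
  dist_comm x y := symDist_comm m₂ x y
  dist_triangle x y z := symDist_triangle m₂ hf.out x y z
  eq_of_dist_eq_zero h := symDist_eq_zero m₂ hf.out h

open MeasureTheory Metric Topology
open scoped NNReal ENNReal

def AntilipschitzCoverOn {X Y : Type*} [PseudoEMetricSpace X] [PseudoEMetricSpace Y]
    (ι : Type*) (C : ℝ≥0) (f : X → Y) (s : Set X) : Prop :=
  ∀ (t : Set Y) (r : ℝ≥0), 0 < r → r ≤ 1 → ediam t ≤ r →
    ∃ u : ι → Set X, s ∩ f ⁻¹' t ⊆ ⋃ i, u i ∧ ∀ i, ediam (u i) ≤ C * r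

theorem AntilipschitzCoverOn.mono {X Y ι : Type*} [PseudoEMetricSpace X] [PseudoEMetricSpace Y]
    {C : ℝ≥0} {f : X → Y} {s s' : Set X} (h : AntilipschitzCoverOn ι C f s) (hs : s' ⊆ s) :
    AntilipschitzCoverOn ι C f s' := fun t r hr₀ hr₁ ht =>
  (h t r hr₀ hr₁ ht).imp fun _ hu => ⟨(inter_subset_inter_left _ hs).trans hu.1, hu.2⟩

section HausdorffMeasure

variable {X Y : Type*} [EMetricSpace X] [EMetricSpace Y] [MeasurableSpace Y] [BorelSpace Y]
  {d : ℝ}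

theorem exists_cover_tsum_ediam_rpow_lt_of_hausdorffMeasure_eq_zero (hd : 0 < d)
    {s : Set Y} (hs : μH[d] s = 0) {r ε : ℝ≥0∞} (hr : 0 < r) (hε : 0 < ε) :
    ∃ t : ℕ → Set Y, s ⊆ ⋃ n, t n ∧ (∀ n, ediam (t n) ≤ r) ∧ ∑' n, ediam (t n) ^ d < ε := by
  have hlt : (⨅ (t : ℕ → Set Y) (_ : s ⊆ ⋃ n, t n) (_ : ∀ n, ediam (t n) ≤ r),
      ∑' n, ⨆ _ : (t n).Nonempty, ediam (t n) ^ d) < ε := by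
    refine lt_of_le_of_lt ?_ hε
    rw [← hs, Measure.hausdorffMeasure_apply]
    exact le_iSup₂_of_le r hr le_rfl
  simp only [iInf_lt_iff] at hlt
  obtain ⟨t, hst, htr, hsum⟩ := hlt
  refine ⟨t, hst, htr, lt_of_le_of_lt (ENNReal.tsum_le_tsum fun n => ?_) hsum⟩
  rcases (t n).eq_empty_or_nonempty with h | h
  · simp [h, ENNReal.zero_rpow_of_pos hd]
  · exact le_iSup_of_le h le_rfl

theorem exists_nnreal_rpow_le_rpow_add (hd : 0 < d) {a : ℝ≥0∞} {ε η : ℝ≥0}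
    (ha : a ≤ ε) (hε : 0 < ε) (hη : 0 < η) :
    ∃ r : ℝ≥0, 0 < r ∧ r ≤ ε ∧ a ≤ r ∧ (r : ℝ≥0∞) ^ d ≤ a ^ d + η := by
  set δ : ℝ≥0 := min ε (η ^ d⁻¹)
  have hδ : 0 < δ := lt_min hε (NNReal.rpow_pos hη)
  have hδd : (δ : ℝ≥0∞) ^ d ≤ η := by
    rw [← ENNReal.coe_rpow_of_nonneg _ hd.le, ENNReal.coe_le_coe]
    calc δ ^ d ≤ (η ^ d⁻¹) ^ d := NNReal.rpow_le_rpow (min_le_right _ _) hd.le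
      _ = η := by rw [← NNReal.rpow_mul, inv_mul_cancel₀ hd.ne', NNReal.rpow_one]
  have ha' : a ≠ ⊤ := ne_top_of_le_ne_top ENNReal.coe_ne_top ha
  refine ⟨max a.toNNReal δ, lt_max_of_lt_right hδ, max_le ?_ (min_le_left _ _), ?_, ?_⟩
  · simpa using ENNReal.toNNReal_mono ENNReal.coe_ne_top ha
  · rw [ENNReal.coe_max, ENNReal.coe_toNNReal ha']; exact le_max_left _ _
  · rw [ENNReal.coe_max, ENNReal.coe_toNNReal ha']
    rcases le_total a δ with h | h
    · rw [max_eq_right h]; exact hδd.trans le_add_self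
    · rw [max_eq_left h]; exact le_self_add

namespace AntilipschitzCoverOn

variable {f : X → Y} {s : Set X} {ι : Type*} [Fintype ι] {C : ℝ≥0}

theorem exists_cover_tsum_ediam_rpow_le (h : AntilipschitzCoverOn ι C f s) (hd : 0 < d)
    (hs : μH[d] (f '' s) = 0) {ε : ℝ≥0} (hε₀ : 0 < ε) (hε₁ : ε ≤ 1) :
    ∃ T : ℕ × ι → Set X, s ⊆ ⋃ p, T p ∧ (∀ p, ediam (T p) ≤ C * ε) ∧
      ∑' p, ediam (T p) ^ d ≤ Fintype.card ι * (C : ℝ≥0∞) ^ d * (2 * ε) := by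
  have hε : (0 : ℝ≥0∞) < ε := ENNReal.coe_pos.2 hε₀
  obtain ⟨t, hst, htε, hsum⟩ :=
    exists_cover_tsum_ediam_rpow_lt_of_hausdorffMeasure_eq_zero hd hs hε hε
  obtain ⟨η, hη₀, hη⟩ := ENNReal.exists_pos_sum_of_countable hε.ne' ℕ
  -- The covering hypothesis only applies at positive scales, so every diameter is first
  -- enlarged to a positive radius, at a summable cost.
  choose r hr₀ hrε htr hrd using fun n => exists_nnreal_rpow_le_rpow_add hd (htε n) hε₀ (hη₀ n)
  choose u hsu hu using fun n => h (t n) (r n) (hr₀ n) ((hrε n).trans hε₁) (htr n)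
  refine ⟨fun p => u p.1 p.2, fun x hx => ?_, fun p => (hu p.1 p.2).trans ?_, ?_⟩
  · obtain ⟨n, hn⟩ := mem_iUnion.1 (hst (mem_image_of_mem f hx))
    obtain ⟨i, hi⟩ := mem_iUnion.1 (hsu n ⟨hx, hn⟩)
    exact mem_iUnion.2 ⟨(n, i), hi⟩
  · gcongr; exact hrε p.1
  calc ∑' p : ℕ × ι, ediam (u p.1 p.2) ^ d
      = ∑' n, ∑' i, ediam (u n i) ^ d := ENNReal.tsum_prod (f := fun n i => ediam (u n i) ^ d)
    _ ≤ ∑' n, ∑' _ : ι, ((C : ℝ≥0∞) * r n) ^ d := by gcongr with n i; exact hu n i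
    _ = Fintype.card ι * C ^ d * ∑' n, (r n : ℝ≥0∞) ^ d := by
        simp [tsum_fintype, ENNReal.mul_rpow_of_nonneg _ _ hd.le, ENNReal.tsum_mul_left,
          mul_assoc]
    _ ≤ Fintype.card ι * C ^ d * ∑' n, (ediam (t n) ^ d + η n) := by
        gcongr with n; exact hrd n
    _ ≤ Fintype.card ι * C ^ d * (2 * ε) := by
        rw [ENNReal.tsum_add, two_mul]
        gcongr

theorem hausdorffMeasure_eq_zero_of_image [MeasurableSpace X] [BorelSpace X]
    (h : AntilipschitzCoverOn ι C f s) (hd : 0 < d) (hs : μH[d] (f '' s) = 0) :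
    μH[d] s = 0 := by
  set ε : ℕ → ℝ≥0 := fun q => 1 / ((q : ℝ≥0) + 1)
  choose T hsT hTdiam hTsum using fun q => h.exists_cover_tsum_ediam_rpow_le hd hs
    (ε := ε q) (by positivity) (div_le_one_of_le₀ le_add_self (by positivity))
  have hε : Tendsto (fun q => (ε q : ℝ≥0∞)) atTop (𝓝 0) :=
    ENNReal.tendsto_coe.2 tendsto_one_div_add_atTop_nhds_zero_nat
  refine le_antisymm ?_ bot_le
  calc μH[d] s ≤ liminf (fun q => ∑' p, ediam (T q p) ^ d) atTop :=
        Measure.hausdorffMeasure_le_liminf_tsum d s _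
          (by simpa using ENNReal.Tendsto.const_mul hε (Or.inr ENNReal.coe_ne_top))
          T (Eventually.of_forall hTdiam) (Eventually.of_forall hsT)
    _ ≤ liminf (fun q => Fintype.card ι * (C : ℝ≥0∞) ^ d * (2 * ε q)) atTop :=
        liminf_le_liminf (Eventually.of_forall hTsum)
    _ = 0 := by
        refine Tendsto.liminf_eq ?_
        simpa using ENNReal.Tendsto.const_mul (ENNReal.Tendsto.const_mul hε (Or.inr (by simp)))
          (Or.inr (by finiteness))

end AntilipschitzCoverOn

end HausdorffMeasure

theorem AntilipschitzCoverOn.le_dimH_image {X Y ι : Type*} [EMetricSpace X] [EMetricSpace Y]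
    [Fintype ι] {C : ℝ≥0} {f : X → Y} {s : Set X} (h : AntilipschitzCoverOn ι C f s) :
    dimH s ≤ dimH (f '' s) := by
  borelize X Y
  refine dimH_le fun d hd => le_of_not_gt fun hlt => ?_
  have hd₀ : (0 : ℝ) < d := NNReal.coe_pos.2 (ENNReal.coe_pos.1 (bot_le.trans_lt hlt))
  simp [h.hausdorffMeasure_eq_zero_of_image hd₀ (hausdorffMeasure_of_dimH_lt hlt)] at hd

section Rotation

theorem floor_add_eq_floor_add_ite {a θ : ℝ} (h0 : 0 ≤ θ) (h1 : θ < 1) :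
    ⌊a + θ⌋ = ⌊a⌋ + if 1 - θ ≤ Int.fract a then 1 else 0 := by
  have ha : a + θ = ⌊a⌋ + (Int.fract a + θ) := by rw [← add_assoc, Int.floor_add_fract]
  rw [ha, Int.floor_intCast_add]
  have := Int.fract_nonneg a
  have := Int.fract_lt_one a
  congr 1
  split_ifs <;> rw [Int.floor_eq_iff] <;> push_cast <;> constructor <;> linarith

theorem count_vseq {θ t : ℝ} (h0 : 0 ≤ θ) (h1 : θ < 1) (ht : t ∈ Ico (0 : ℝ) 1) (n : ℕ) :
    (Nat.count (fun j => vseq θ t j = true) n : ℤ) = ⌊t + n * θ⌋ := by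
  induction n with
  | zero => simpa using (Int.floor_eq_zero_iff.2 ht).symm
  | succ n ih =>
    rw [Nat.count_succ, Nat.cast_add, ih, Nat.cast_succ, add_one_mul, ← add_assoc,
      floor_add_eq_floor_add_ite h0 h1]
    simp only [vseq, decide_eq_true_eq]
    split_ifs <;> rfl

theorem exists_vseq_eq_of_mem_Sset {θ : ℝ} {τ : ℕ → Bool} (hτ : τ ∈ Sset θ) (n : ℕ) :
    ∃ t ∈ Ico (0 : ℝ) 1, ∀ j < n, τ j = vseq θ t j := by
  have hopen : IsOpen ((Finset.range n : Set ℕ).pi fun j => {τ j}) :=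
    isOpen_set_pi (Finset.finite_toSet _) fun _ _ => isOpen_discrete _
  obtain ⟨_, hv, t, ht, rfl⟩ := mem_closure_iff.1 hτ _ hopen fun j _ => rfl
  exact ⟨t, ht, fun j hj => (hv j (by simpa using hj)).symm⟩

theorem abs_count_sub_le_of_mem_Sset {θ : ℝ} {τ : ℕ → Bool} (hτ : τ ∈ Sset θ) (h0 : 0 ≤ θ)
    (h1 : θ < 1) (n : ℕ) : |(Nat.count (fun j => τ j = true) n : ℝ) - n * θ| ≤ 1 := by
  obtain ⟨t, ht, hτt⟩ := exists_vseq_eq_of_mem_Sset hτ n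
  have hcount : Nat.count (fun j => τ j = true) n = Nat.count (fun j => vseq θ t j = true) n :=
    le_antisymm (Nat.count_mono_left fun j hj h => by rwa [← hτt j hj])
      (Nat.count_mono_left fun j hj h => by rwa [hτt j hj])
  have hfloor : (Nat.count (fun j => τ j = true) n : ℝ) = ⌊t + n * θ⌋ := by
    rw [hcount]; exact_mod_cast count_vseq h0 h1 ht n
  rw [hfloor, abs_le]
  have := Int.floor_le (t + n * θ)
  have := Int.sub_one_lt_floor (t + n * θ)
  constructor <;> linarith [ht.1, ht.2]

end Rotation

section Digits

def digitSum (m : ℕ) (u : ℕ → ℕ) : ℝ := ∑' k, (u k : ℝ) / (m : ℝ) ^ (k + 1)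

def digPref (m : ℕ) (u : ℕ → ℕ) : ℕ → ℕ
  | 0 => 0
  | n + 1 => digPref m u n * m + u n

variable {m : ℕ} {u v : ℕ → ℕ}

theorem digitSum_eq_ofDigits (hu : ∀ k, u k < m) :
    digitSum m u = Real.ofDigits fun k => (⟨u k, hu k⟩ : Fin m) := by
  simp [digitSum, Real.ofDigits, Real.ofDigitsTerm, div_eq_mul_inv]

theorem digitSum_nonneg (u : ℕ → ℕ) : 0 ≤ digitSum m u :=
  tsum_nonneg fun _ => by positivity

theorem digitSum_le_one (hu : ∀ k, u k < m) : digitSum m u ≤ 1 :=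
  digitSum_eq_ofDigits hu ▸ Real.ofDigits_le_one _

theorem abs_digitSum_sub_le (hu : ∀ k, u k < m) (hv : ∀ k, v k < m) {n : ℕ}
    (h : ∀ k < n, u k = v k) : |digitSum m u - digitSum m v| ≤ ((m : ℝ) ^ n)⁻¹ := by
  rw [digitSum_eq_ofDigits hu, digitSum_eq_ofDigits hv]
  exact Real.abs_ofDigits_sub_ofDigits_le fun k hk => Fin.ext (h k hk)

theorem digPref_eq_pow_mul_sum (hm : m ≠ 0) (u : ℕ → ℕ) (n : ℕ) :
    (digPref m u n : ℝ) = (m : ℝ) ^ n * ∑ k ∈ Finset.range n, (u k : ℝ) / (m : ℝ) ^ (k + 1) := by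
  have : (m : ℝ) ≠ 0 := Nat.cast_ne_zero.2 hm
  induction n with
  | zero => simp [digPref]
  | succ n ih =>
    rw [digPref, Nat.cast_add, Nat.cast_mul, ih, Finset.sum_range_succ]
    field_simp
    ring

theorem pow_mul_digitSum (hu : ∀ k, u k < m) (n : ℕ) :
    (m : ℝ) ^ n * digitSum m u = digPref m u n + digitSum m fun k => u (k + n) := by
  have hm : m ≠ 0 := Nat.ne_zero_of_lt (hu 0)
  rw [digitSum_eq_ofDigits hu, Real.ofDigits_eq_sum_add_ofDigits _ n, mul_add, ← mul_assoc,
    mul_inv_cancel₀ (pow_ne_zero _ (Nat.cast_ne_zero.2 hm)), one_mul,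
    digitSum_eq_ofDigits fun k => hu (k + n), digPref_eq_pow_mul_sum hm]
  simp [Real.ofDigitsTerm, div_eq_mul_inv]

theorem eq_of_digPref_eq (hu : ∀ k, u k < m) (hv : ∀ k, v k < m) {n : ℕ}
    (h : digPref m u n = digPref m v n) : ∀ k < n, u k = v k := by
  induction n with
  | zero => intro k hk; omega
  | succ n ih =>
    have hm : 0 < m := (Nat.zero_le _).trans_lt (hu 0)
    have hdiv (w : ℕ → ℕ) (hw : w n < m) :
        digPref m w (n + 1) / m = digPref m w n ∧ digPref m w (n + 1) % m = w n :=
      (Nat.div_mod_unique hm).2 ⟨by rw [digPref]; ring, hw⟩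
    intro k hk
    rcases Nat.lt_succ_iff_lt_or_eq.1 hk with hk | rfl
    · exact ih (by rw [← (hdiv u (hu n)).1, h, (hdiv v (hv n)).1]) k hk
    · rw [← (hdiv u (hu k)).2, h, (hdiv v (hv k)).2]

theorem abs_digPref_sub_le (hu : ∀ k, u k < m) (hv : ∀ k, v k < m) {n c : ℕ} {D : ℝ}
    (h : |digitSum m u - digitSum m v| ≤ D) (hc : (m : ℝ) ^ n * D ≤ c) :
    |(digPref m u n : ℤ) - digPref m v n| ≤ c + 1 := by
  have hu' := pow_mul_digitSum hu n
  have hv' := pow_mul_digitSum hv n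
  have := digitSum_nonneg (m := m) fun k => u (k + n)
  have := digitSum_nonneg (m := m) fun k => v (k + n)
  have := digitSum_le_one fun k => hu (k + n)
  have := digitSum_le_one fun k => hv (k + n)
  rw [abs_le] at h
  have h₁ := mul_le_mul_of_nonneg_left h.1 (by positivity : (0 : ℝ) ≤ (m : ℝ) ^ n)
  have h₂ := mul_le_mul_of_nonneg_left h.2 (by positivity : (0 : ℝ) ≤ (m : ℝ) ^ n)
  have : |(digPref m u n : ℝ) - digPref m v n| ≤ c + 1 := by
    rw [abs_le]; constructor <;> linarith
  exact_mod_cast this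

end Digits

theorem exists_fin_cover_of_abs_sub_le {α : Type*} (g : α → ℤ) {B : Set α} {c : ℕ}
    (h : ∀ x ∈ B, ∀ y ∈ B, |g x - g y| ≤ c) :
    ∃ v : Fin (2 * c + 1) → Set α, B ⊆ ⋃ i, v i ∧ ∀ i, ∀ x ∈ v i, ∀ y ∈ v i, g x = g y := by
  rcases B.eq_empty_or_nonempty with rfl | ⟨x₀, hx₀⟩
  · exact ⟨fun _ => ∅, empty_subset _, by simp⟩
  refine ⟨fun i => g ⁻¹' {g x₀ - c + i}, fun x hx => mem_iUnion.2 ⟨⟨(g x - g x₀ + c).toNat, ?_⟩, ?_⟩,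
    fun i x hx y hy => hx.trans hy.symm⟩
  · have := abs_le.1 (h x hx x₀ hx₀); omega
  · have := abs_le.1 (h x hx x₀ hx₀); simp only [mem_preimage, mem_singleton_iff]; omega

section Logb

variable {b x : ℝ}

theorem rpow_natCast_mul_logb (hb : 1 < b) (hx : 0 < x) (k : ℕ) :
    b ^ ((k : ℝ) * Real.logb b x) = x ^ k := by
  rw [mul_comm, Real.rpow_mul (by linarith), Real.rpow_logb (by linarith) hb.ne' hx,
    Real.rpow_natCast]

theorem pow_le_mul_pow_of_le_mul_logb (hb : 1 < b) (hx : 0 < x) {N k : ℕ}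
    (h : (N : ℝ) ≤ k * Real.logb b x + 1) : b ^ N ≤ b * x ^ k := by
  calc b ^ N = b ^ (N : ℝ) := (Real.rpow_natCast _ _).symm
    _ ≤ b ^ ((k : ℝ) * Real.logb b x + 1) := Real.rpow_le_rpow_of_exponent_le hb.le h
    _ = b * x ^ k := by
      rw [Real.rpow_add (by linarith), Real.rpow_one, rpow_natCast_mul_logb hb hx, mul_comm]

theorem pow_le_mul_pow_of_mul_logb_le (hb : 1 < b) (hx : 0 < x) {N k : ℕ}
    (h : k * Real.logb b x ≤ N + 1) : x ^ k ≤ b * b ^ N := by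
  calc x ^ k = b ^ ((k : ℝ) * Real.logb b x) := (rpow_natCast_mul_logb hb hx k).symm
    _ ≤ b ^ ((N : ℝ) + 1) := Real.rpow_le_rpow_of_exponent_le hb.le h
    _ = b * b ^ N := by rw [Real.rpow_add (by linarith), Real.rpow_one, Real.rpow_natCast, mul_comm]

end Logb

namespace SymSeq

variable {m₂ : ℕ} [Fact (2 ≤ m₂)]

theorem dist_le_of_forall_lt_eq {x y : SymSeq m₂} {n : ℕ} (h : ∀ j < n, x j = y j) :
    dist x y ≤ ((m₂ : ℝ) ^ n)⁻¹ := by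
  change symDist m₂ x y ≤ _
  unfold symDist
  split_ifs with hxy
  · positivity
  · have hmem := Nat.sInf_mem (Function.ne_iff.1 hxy)
    have hm₂ : (1 : ℝ) ≤ m₂ := by exact_mod_cast (Fact.out : 2 ≤ m₂).trans' (by norm_num)
    gcongr
    by_contra! hlt
    exact hmem (h _ hlt)

theorem exists_dist_eq {x y : SymSeq m₂} (hxy : x ≠ y) :
    ∃ n, dist x y = ((m₂ : ℝ) ^ n)⁻¹ ∧ ∀ j < n, x j = y j :=
  ⟨sInf {k | x k ≠ y k}, if_neg hxy, fun _ hj => not_not.1 (Nat.notMem_of_lt_sInf hj)⟩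

end SymSeq

-- `piSym m₁ m₂ τ c` is definitionally `(digitSum m₁ (xDigits τ c), digitSum m₂ (yDigits c))`.
def xDigits (τ : ℕ → Bool) (c : ℕ → ℕ × ℕ) (k : ℕ) : ℕ := (c (nthOne τ k)).1

def yDigits (c : ℕ → ℕ × ℕ) (k : ℕ) : ℕ := (c k).2

def digitCodes (m₁ m₂ : ℕ) (τ : ℕ → Bool) : Set (SymSeq m₂) :=
  { c | (∀ k, xDigits τ c k < m₁) ∧ (∀ k, yDigits c k < m₂) ∧ ∀ n, τ n = false → (c n).1 = 1 }

theorem Xset_subset_digitCodes {m₁ m₂ n₁ n₂ : ℕ} {Γ Λ : ℕ → Set ℕ} {τ : ℕ → Bool} {ω η : ℕ → ℕ}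
    (hΓ : ∀ i < n₁, Γ i ⊆ Iio m₁) (hΛ : ∀ j < n₂, Λ j ⊆ Iio m₂) (hω : ∀ k, ω k < n₁)
    (hη : ∀ k, η k < n₂) : Xset Γ Λ τ ω η ⊆ digitCodes m₁ m₂ τ :=
  fun _ ⟨hb, ha, hoff⟩ => ⟨fun k => hΓ _ (hω k) (ha k), fun n => hΛ _ (hη n) (hb n), hoff⟩

theorem eq_of_mem_digitCodes_of_digPref_eq {m₁ m₂ : ℕ} {τ : ℕ → Bool} {x y : ℕ → ℕ × ℕ}
    (hx : x ∈ digitCodes m₁ m₂ τ) (hy : y ∈ digitCodes m₁ m₂ τ) {n : ℕ}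
    (hx_eq : digPref m₁ (xDigits τ x) (Nat.count (fun j => τ j = true) n) =
      digPref m₁ (xDigits τ y) (Nat.count (fun j => τ j = true) n))
    (hy_eq : digPref m₂ (yDigits x) n = digPref m₂ (yDigits y) n) : ∀ j < n, x j = y j := by
  intro j hj
  refine Prod.ext ?_ (eq_of_digPref_eq hx.2.1 hy.2.1 hy_eq j hj)
  cases hτj : τ j
  · rw [hx.2.2 j hτj, hy.2.2 j hτj]
  · have := eq_of_digPref_eq hx.1 hy.1 hx_eq _ (Nat.count_strict_mono hτj hj)
    rwa [xDigits, xDigits, nthOne, Nat.nth_count hτj] at this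

section Projection

variable {m₁ m₂ : ℕ} [Fact (2 ≤ m₂)] {τ : ℕ → Bool}

theorem lipschitzOnWith_piSym (hm : m₂ < m₁)
    (hτ : ∀ n, |(Nat.count (fun j => τ j = true) n : ℝ) - n * Real.logb m₁ m₂| ≤ 1) :
    LipschitzOnWith (m₁ : ℝ≥0) (fun x : SymSeq m₂ => piSym m₁ m₂ τ x) (digitCodes m₁ m₂ τ) := by
  have hm₂ : (2 : ℝ) ≤ m₂ := by exact_mod_cast (Fact.out : 2 ≤ m₂)
  have hm₁ : (m₂ : ℝ) < m₁ := by exact_mod_cast hm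
  refine LipschitzOnWith.of_dist_le_mul fun x hx y hy => ?_
  rcases eq_or_ne x y with rfl | hxy
  · simp
  obtain ⟨n, hdist, hagree⟩ := SymSeq.exists_dist_eq hxy
  set N := Nat.count (fun j => τ j = true) n
  have hpow : (m₂ : ℝ) ^ n ≤ m₁ * m₁ ^ N :=
    pow_le_mul_pow_of_mul_logb_le (by linarith) (by linarith) (by linarith [(abs_le.1 (hτ n)).1])
  simp only [hdist, Prod.dist_eq, Real.dist_eq, NNReal.coe_natCast]
  refine max_le ?_ ?_
  · calc _ ≤ ((m₁ : ℝ) ^ N)⁻¹ := abs_digitSum_sub_le hx.1 hy.1 fun k hk =>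
          congrArg Prod.fst (hagree _ (Nat.nth_lt_of_lt_count hk))
      _ = m₁ * ((m₁ : ℝ) * m₁ ^ N)⁻¹ := by
          rw [mul_inv, ← mul_assoc, mul_inv_cancel₀ (by linarith), one_mul]
      _ ≤ m₁ * ((m₂ : ℝ) ^ n)⁻¹ := by gcongr
  · calc _ ≤ ((m₂ : ℝ) ^ n)⁻¹ :=
          abs_digitSum_sub_le hx.2.1 hy.2.1 fun k hk => congrArg Prod.snd (hagree k hk)
      _ ≤ m₁ * ((m₂ : ℝ) ^ n)⁻¹ := le_mul_of_one_le_left (by positivity) (by linarith)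

theorem antilipschitzCoverOn_piSym (hm : m₂ < m₁)
    (hτ : ∀ n, |(Nat.count (fun j => τ j = true) n : ℝ) - n * Real.logb m₁ m₂| ≤ 1) :
    AntilipschitzCoverOn (Fin (2 * (m₁ + 1) + 1) × Fin (2 * (1 + 1) + 1)) m₂
      (fun x : SymSeq m₂ => piSym m₁ m₂ τ x) (digitCodes m₁ m₂ τ) := by
  intro t r hr₀ hr₁ ht
  have hm₂ : (2 : ℝ) ≤ m₂ := by exact_mod_cast (Fact.out : 2 ≤ m₂)
  have hm₁ : (m₂ : ℝ) < m₁ := by exact_mod_cast hm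
  have hr : (0 : ℝ) < r := hr₀
  set S := digitCodes m₁ m₂ τ ∩ (fun x : SymSeq m₂ => piSym m₁ m₂ τ x) ⁻¹' t
  obtain ⟨n, hn, hn'⟩ := exists_nat_pow_near (one_le_inv₀ hr |>.2 hr₁) (by linarith : (1 : ℝ) < m₂)
  set N := Nat.count (fun j => τ j = true) n
  have hN : (m₁ : ℝ) ^ N ≤ m₁ * m₂ ^ n :=
    pow_le_mul_pow_of_le_mul_logb (by linarith) (by linarith) (by linarith [(abs_le.1 (hτ n)).2])
  have hclose : ∀ x ∈ S, ∀ y ∈ S, dist (piSym m₁ m₂ τ x) (piSym m₁ m₂ τ y) ≤ r :=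
    fun x hx y hy => dist_le_coe.2 (edist_le_coe.1 (edist_le_of_ediam_le hx.2 hy.2 ht))
  have hx_close : ∀ x ∈ S, ∀ y ∈ S,
      |(digPref m₁ (xDigits τ x) N : ℤ) - digPref m₁ (xDigits τ y) N| ≤ (m₁ + 1 : ℕ) := by
    intro x hx y hy
    push_cast
    refine abs_digPref_sub_le hx.1.1 hy.1.1 ((le_max_left _ _).trans (hclose x hx y hy)) ?_
    calc (m₁ : ℝ) ^ N * r ≤ m₁ * m₂ ^ n * r := by gcongr
      _ ≤ m₁ * (r : ℝ)⁻¹ * r := by gcongr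
      _ = m₁ := by field_simp
  have hy_close : ∀ x ∈ S, ∀ y ∈ S,
      |(digPref m₂ (yDigits x) n : ℤ) - digPref m₂ (yDigits y) n| ≤ (1 + 1 : ℕ) := by
    intro x hx y hy
    push_cast
    refine abs_digPref_sub_le hx.1.2.1 hy.1.2.1 ((le_max_right _ _).trans (hclose x hx y hy)) ?_
    calc (m₂ : ℝ) ^ n * r ≤ (r : ℝ)⁻¹ * r := by gcongr
      _ = (1 : ℕ) := by push_cast; field_simp
  obtain ⟨v₁, hSv₁, hv₁⟩ := exists_fin_cover_of_abs_sub_le _ hx_close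
  obtain ⟨v₂, hSv₂, hv₂⟩ := exists_fin_cover_of_abs_sub_le _ hy_close
  refine ⟨fun i => S ∩ v₁ i.1 ∩ v₂ i.2, fun x hx => ?_, fun i => ?_⟩
  · obtain ⟨i, hi⟩ := mem_iUnion.1 (hSv₁ hx)
    obtain ⟨j, hj⟩ := mem_iUnion.1 (hSv₂ hx)
    exact mem_iUnion.2 ⟨(i, j), ⟨hx, hi⟩, hj⟩
  refine (ediam_le_of_forall_dist_le fun x hx y hy => ?_).trans_eq ENNReal.ofReal_coe_nnreal
  have hagree := eq_of_mem_digitCodes_of_digPref_eq hx.1.1.1 hy.1.1.1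
    (Nat.cast_injective (hv₁ i.1 x hx.1.2 y hy.1.2)) (Nat.cast_injective (hv₂ i.2 x hx.2 y hy.2))
  calc dist x y ≤ ((m₂ : ℝ) ^ n)⁻¹ := SymSeq.dist_le_of_forall_lt_eq hagree
    _ ≤ m₂ * r := by
      have := (inv_lt_iff_one_lt_mul₀ hr).1 hn'
      rw [inv_le_iff_one_le_mul₀ (by positivity)]
      rw [pow_succ] at this
      linarith
    _ = ((m₂ : ℝ≥0) * r : ℝ≥0) := by push_cast; ring

end Projection

theorem stmt16_general
    (m₁ m₂ n₁ n₂ : ℕ) [hm₂ : Fact (2 ≤ m₂)] (hm : m₂ < m₁)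
    (θ : ℝ) (hθ : θ = Real.log m₂ / Real.log m₁)
    (Γ Λ : ℕ → Set ℕ)
    (hΓ : ∀ i < n₁, (Γ i).Nonempty ∧ Γ i ⊆ Set.Iio m₁)
    (hΛ : ∀ j < n₂, (Λ j).Nonempty ∧ Λ j ⊆ Set.Iio m₂)
    (τ : ℕ → Bool) (hτ : τ ∈ Sset θ)
    (ω η : ℕ → ℕ) (hω : ∀ k, ω k < n₁) (hη : ∀ k, η k < n₂)
    (A : Set (SymSeq m₂)) (hA : A ⊆ Xset Γ Λ τ ω η) :
    dimH A = dimH (piSym m₁ m₂ τ '' A) := by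
  have hlog₂ : 0 < Real.log m₂ := Real.log_pos (by exact_mod_cast hm₂.out)
  have hlog : Real.log m₂ < Real.log m₁ :=
    Real.log_lt_log (Nat.cast_pos.2 (by have := hm₂.out; omega)) (by exact_mod_cast hm)
  have hcount := abs_count_sub_le_of_mem_Sset hτ (hθ ▸ by positivity)
    (hθ ▸ (div_lt_one (hlog₂.trans hlog)).2 hlog)
  rw [hθ, Real.log_div_log] at hcount
  have hA' : A ⊆ digitCodes m₁ m₂ τ := hA.trans
    (Xset_subset_digitCodes (fun i hi => (hΓ i hi).2) (fun j hj => (hΛ j hj).2) hω hη)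
  exact le_antisymm ((antilipschitzCoverOn_piSym hm hcount).mono hA').le_dimH_image
    ((lipschitzOnWith_piSym hm hcount).mono hA').dimH_image_le

/-- `π_{τ,ω,η}` preserves Hausdorff dimension of subsets of `X_{τ,ω,η}`. -/
theorem stmt16
    (m₁ m₂ n₁ n₂ : ℕ) [hm₂ : Fact (2 ≤ m₂)] (hm : m₂ < m₁) (hn₁ : 2 ≤ n₁) (hn₂ : 2 ≤ n₂)
    (θ : ℝ) (hθ : θ = Real.log m₂ / Real.log m₁) (hirr : Irrational θ)
    (Γ Λ : ℕ → Set ℕ)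
    (hΓ : ∀ i < n₁, (Γ i).Nonempty ∧ Γ i ⊆ Set.Iio m₁)
    (hΛ : ∀ j < n₂, (Λ j).Nonempty ∧ Λ j ⊆ Set.Iio m₂)
    (τ : ℕ → Bool) (hτ : τ ∈ Sset θ)
    (ω η : ℕ → ℕ) (hω : ∀ k, ω k < n₁) (hη : ∀ k, η k < n₂)
    (A : Set (SymSeq m₂)) (hA : A ⊆ Xset Γ Λ τ ω η) :
    dimH A = dimH (piSym m₁ m₂ τ '' A) :=
  stmt16_general m₁ m₂ n₁ n₂ (hm₂ := hm₂) hm θ hθ Γ Λ hΓ hΛ τ hτ ω η hω hη A hA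
end
end

section
/- Let F be the Bedford–McMullen carpet with exponents (3,2) and digit set Γ = {(0,0),(0,1),(2,0)}, i.e. F = {(∑_{k=1}^∞ x_k 3^{−k}, ∑_{k=1}^∞ y_k 2^{−k}) : (x_k,y_k) ∈ Γ for all k}, and let E be the Bedford–McMullen carpet with exponents (5,3) and digit set Λ = {(i,0) : 0 ≤ i ≤ 4} ∪ {(j,2) : 0 ≤ j ≤ 4} ∪ {(1,1)}, i.e. E = {(∑_{k=1}^∞ a_k 5^{−k}, ∑_{k=1}^∞ b_k 3^{−k}) : (a_k,b_k) ∈ Λ for all k}. Then the anti-diagonal linear map (x,y) ↦ (y,x) maps F into E, i.e. {(y,x) : (x,y) ∈ F} ⊆ E. -/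
open Set Filter
noncomputable section

/-- Base-`m` expansion `∑_{k≥0} d k / m^(k+1)`. -/
def expandIn (m : ℕ) (d : ℕ → ℕ) : ℝ := ∑' k : ℕ, (d k : ℝ) / (m : ℝ) ^ (k + 1)

/-- The Bedford–McMullen carpet with exponents `(m,n)` and digit set `Γ`. -/
def bmCarpet (m n : ℕ) (Γ : Set (ℕ × ℕ)) : Set (ℝ × ℝ) :=
  { p | ∃ d : ℕ → ℕ × ℕ, (∀ k, d k ∈ Γ) ∧
      p.1 = expandIn m (fun k => (d k).1) ∧ p.2 = expandIn n (fun k => (d k).2) }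

/-!
The second coordinate of a point of `F` is an arbitrary binary expansion, hence lies in `[0, 1]`,
while its first coordinate is a ternary expansion with digits in `{0, 2}`. Since `Λ` contains the
full rows `{(i, 0) : i ≤ 4}` and `{(i, 2) : i ≤ 4}`, the carpet `E` contains `[0, 1] × C`, where `C`
is the set of such ternary expansions: the first coordinate of `E` can be any base-5 expansion,
and every number in `[0, 1]` has one.
-/

lemma expandIn_eq_ofDigits {b : ℕ} (d : ℕ → Fin b) :
    expandIn b (fun k => d k) = Real.ofDigits d := by
  simp only [expandIn, Real.ofDigits, Real.ofDigitsTerm, div_eq_mul_inv]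

lemma expandIn_mem_Icc {b : ℕ} {d : ℕ → ℕ} (hd : ∀ k, d k < b) : expandIn b d ∈ Icc 0 1 := by
  rw [show expandIn b d = _ from expandIn_eq_ofDigits fun k => ⟨d k, hd k⟩]
  exact ⟨Real.ofDigits_nonneg _, Real.ofDigits_le_one _⟩

lemma exists_expandIn_eq {b : ℕ} (hb : 1 < b) {x : ℝ} (hx : x ∈ Icc 0 1) :
    ∃ d : ℕ → ℕ, (∀ k, d k < b) ∧ expandIn b d = x := by
  obtain ⟨d, -, rfl⟩ := Real.ofDigits_SurjOn hb hx
  exact ⟨fun k => d k, fun k => (d k).isLt, expandIn_eq_ofDigits d⟩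

lemma mk_expandIn_mem_bmCarpet_of_full_rows {m n : ℕ} (hm : 1 < m) {Λ : Set (ℕ × ℕ)}
    {e : ℕ → ℕ} (he : ∀ k i, i < m → (i, e k) ∈ Λ) {x : ℝ} (hx : x ∈ Icc 0 1) :
    (x, expandIn n e) ∈ bmCarpet m n Λ := by
  obtain ⟨d, hd, rfl⟩ := exists_expandIn_eq hm hx
  exact ⟨fun k => (d k, e k), fun k => he k _ (hd k), rfl, rfl⟩

/-- The carpet `F` with exponents `(3,2)` and digits
`{(0,0),(0,1),(2,0)}` is mapped into the carpet `E` with exponents `(5,3)` and digits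
`{(i,0) : i ≤ 4} ∪ {(j,2) : j ≤ 4} ∪ {(1,1)}` by the flip `(x,y) ↦ (y,x)`. -/
theorem stmt19 :
    (fun p : ℝ × ℝ => (p.2, p.1)) '' bmCarpet 3 2 {(0, 0), (0, 1), (2, 0)} ⊆
      bmCarpet 5 3
        { q : ℕ × ℕ | (q.2 = 0 ∧ q.1 ≤ 4) ∨ (q.2 = 2 ∧ q.1 ≤ 4) ∨ q = (1, 1) } := by
  rintro _ ⟨⟨x, y⟩, ⟨d, hd, rfl, rfl⟩, rfl⟩
  have hdigit : ∀ k, ((d k).1 = 0 ∨ (d k).1 = 2) ∧ (d k).2 < 2 := fun k => by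
    obtain h | h | h : d k = (0, 0) ∨ d k = (0, 1) ∨ d k = (2, 0) := hd k <;> simp [h]
  refine mk_expandIn_mem_bmCarpet_of_full_rows (by norm_num) (fun k i hi => ?_)
    (expandIn_mem_Icc fun k => (hdigit k).2)
  rcases (hdigit k).1 with h | h <;> simp [h] <;> omega
end
end
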